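/- arXiv:0908.2616 — 2 statements merged into one kernel-verified Lean document; each statement's English description precedes it below -/
import Mathlib

section
/- (Theorem 1(i), interval-design convergence.) Consider the interval design with target p ∈ (0,1), margins Δp₁, Δp₂ > 0, and MTD u*. Suppose F(u*) ∈ (p−Δp₁, p+Δp₂) and u* is the unique level u ∈ {1,…,m} with F(u) ∈ [p−Δp₁, p+Δp₂]. Then almost surely there exists N such that X_n = u* for all n ≥ N; that is, the dose allocations converge almost surely to the MTD. -/
open MeasureTheory ProbabilityTheory Filter

noncomputable section

/-- Toxicity response of subject `i`: `Y i = 1` iff `U i ≤ F (X i)`. -/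
def resp {Ω : Type*} (F : ℕ → ℝ) (U : ℕ → Ω → ℝ) (X : ℕ → Ω → ℕ) (i : ℕ) (ω : Ω) : ℝ :=
  if U i ω ≤ F (X i ω) then 1 else 0

/-- Number of subjects among the first `n` assigned to dose level `u`. -/
def visits {Ω : Type*} (X : ℕ → Ω → ℕ) (u n : ℕ) (ω : Ω) : ℕ :=
  ((Finset.Icc 1 n).filter fun i => X i ω = u).card

/-- The martingale `M_n = ∑_{i=1}^n 1{X_i = u} (Y_i − F(u))`. -/
def Mart {Ω : Type*} (F : ℕ → ℝ) (U : ℕ → Ω → ℝ) (X : ℕ → Ω → ℕ) (u n : ℕ) (ω : Ω) : ℝ :=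
  ∑ i ∈ Finset.Icc 1 n, (if X i ω = u then (1:ℝ) else 0) * (resp F U X i ω - F u)

/-- Empirical toxicity frequency at dose `u` after `n` subjects. -/
def Fhat {Ω : Type*} (F : ℕ → ℝ) (U : ℕ → Ω → ℝ) (X : ℕ → Ω → ℕ) (u n : ℕ) (ω : Ω) : ℝ :=
  (∑ i ∈ Finset.Icc 1 n, if X i ω = u then resp F U X i ω else 0) / (visits X u n ω : ℝ)

/-- The filtration `ℱ_n = σ(U_1, …, U_n)`. -/
def natFilt {Ω : Type*} [mΩ : MeasurableSpace Ω] (U : ℕ → Ω → ℝ)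
    (hU : ∀ i, Measurable (U i)) : Filtration ℕ mΩ where
  seq n := ⨆ i ∈ Finset.Icc 1 n, MeasurableSpace.comap (U i) inferInstance
  mono' := fun a b hab => by
    refine iSup₂_le fun i hi => ?_
    refine le_iSup₂_of_le i ?_ le_rfl
    rw [Finset.mem_Icc] at hi ⊢
    exact ⟨hi.1, hi.2.trans hab⟩
  le' := fun n => iSup₂_le fun i _ => (hU i).comap_le

/-- The interval design transition rule with target `p` and margins `Δ₁, Δ₂`:
repeat the current dose if the empirical rate at it lies in `(p−Δ₁, p+Δ₂)`, escalate one
level (boundary permitting) if it is `≤ p−Δ₁`, and de-escalate one level (boundary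
permitting) if it is `≥ p+Δ₂`. -/
def intervalRule {Ω : Type*} (m : ℕ) (p Δ₁ Δ₂ : ℝ) (F : ℕ → ℝ) (U : ℕ → Ω → ℝ)
    (X : ℕ → Ω → ℕ) : Prop :=
  ∀ n, 1 ≤ n → ∀ ω : Ω,
    (p - Δ₁ < Fhat F U X (X n ω) n ω → Fhat F U X (X n ω) n ω < p + Δ₂ →
      X (n + 1) ω = X n ω) ∧
    (Fhat F U X (X n ω) n ω ≤ p - Δ₁ → X (n + 1) ω = min (X n ω + 1) m) ∧
    (p + Δ₂ ≤ Fhat F U X (X n ω) n ω → X (n + 1) ω = max (X n ω - 1) 1)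

/-! At a fixed level `u`, the centred responses `1{X_i = u} (Y_i - F u)` are martingale
differences for `σ(U_1, …, U_i)`: the allocation `X_i` is a function of `U_1, …, U_{i-1}`, while
`U_i` is independent of those and uniform. Dividing the `i`-th difference by the number of visits
to `u` so far gives a martingale whose quadratic variation is at most `∑ 1/k² ≤ 2`, so it converges
almost surely, and Kronecker's lemma turns this into `F̂_n(u) → F(u)` at every level visited
infinitely often. By strict monotonicity and uniqueness of `u*`, `F(u) < p - Δ₁` below `u*`,
`F(u) > p + Δ₂` above it, and `F(u*)` lies in the open interval; so from some time on the design
steps towards `u*` from every level it still visits, and the distance to `u*` decreases to zero. -/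

open Finset Topology Asymptotics

/-- Kronecker's lemma. -/
theorem tendsto_sum_div_of_tendsto_sum_div {a b : ℕ → ℝ} {L : ℝ} (hb0 : 0 < b 0)
    (hmono : Monotone b) (hb : Tendsto b atTop atTop)
    (hs : Tendsto (fun n => ∑ k ∈ range n, a k / b k) atTop (𝓝 L)) :
    Tendsto (fun n => (∑ k ∈ range (n + 1), a k) / b n) atTop (𝓝 0) := by
  set s := fun n => ∑ k ∈ range n, a k / b k
  set w := fun k => b (k + 1) - b k
  have hbpos : ∀ n, 0 < b n := fun n => hb0.trans_le (hmono n.zero_le)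
  have hw : 0 ≤ w := fun k => sub_nonneg.2 (hmono k.le_succ)
  have hsum_w : ∀ n, ∑ k ∈ range n, w k = b n - b 0 := sum_range_sub b
  have hshift : Tendsto (fun k => s (k + 1) - L) atTop (𝓝 0) := by
    simpa using ((tendsto_add_atTop_iff_nat 1).2 hs).sub_const L
  have hsmall : (fun n => ∑ k ∈ range n, w k * (s (k + 1) - L)) =o[atTop] b := by
    have hterm : (fun k => w k * (s (k + 1) - L)) =o[atTop] w := by
      simpa using (isBigO_refl w atTop).mul_isLittleO ((isLittleO_one_iff ℝ).2 hshift)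
    refine (hterm.sum_range hw ?_).trans_isBigO ?_
    · simpa only [hsum_w, sub_eq_add_neg] using tendsto_atTop_add_const_right _ (-b 0) hb
    · refine isBigO_of_le _ fun n => ?_
      rw [hsum_w, Real.norm_of_nonneg (sub_nonneg.2 (hmono n.zero_le)),
        Real.norm_of_nonneg (hbpos n).le]
      linarith
  have habel : ∀ n, (∑ k ∈ range (n + 1), a k) / b n
      = s (n + 1) - (∑ k ∈ range n, w k * (s (k + 1) - L)) / b n - L + L * (b 0 / b n) := by
    intro n
    have hparts := sum_range_by_parts b (fun k => a k / b k) (n + 1)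
    simp only [smul_eq_mul, Nat.add_sub_cancel] at hparts
    have hcancel : ∑ k ∈ range (n + 1), b k * (a k / b k) = ∑ k ∈ range (n + 1), a k :=
      sum_congr rfl fun k _ => mul_div_cancel₀ _ (hbpos k).ne'
    have hsplit : ∑ k ∈ range n, w k * (s (k + 1) - L)
        = ∑ k ∈ range n, w k * s (k + 1) - L * (b n - b 0) := by
      rw [← hsum_w, mul_sum, ← sum_sub_distrib]
      exact sum_congr rfl fun k _ => by ring
    rw [← hcancel, hparts, hsplit]
    field_simp [(hbpos n).ne']
    ring
  simp_rw [habel]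
  have hinv : Tendsto (fun n => b 0 / b n) atTop (𝓝 0) := tendsto_const_nhds.div_atTop hb
  simpa using ((((tendsto_add_atTop_iff_nat 1).2 hs).sub hsmall.tendsto_div_nhds_zero).sub_const
    L).add (hinv.const_mul L)

section SquareIntegrableMartingale

variable {Ω : Type*} {mΩ : MeasurableSpace Ω} {P : Measure Ω} [IsProbabilityMeasure P]
  {ℱ : Filtration ℕ mΩ} {ξ : ℕ → Ω → ℝ}

theorem condExp_mul_eq_zero_of_indep {m m' : MeasurableSpace Ω} (hm : m ≤ mΩ) (hm' : m' ≤ mΩ)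
    (hind : Indep m' m P) {c g : Ω → ℝ} (hc : StronglyMeasurable[m] c)
    (hg : StronglyMeasurable[m'] g) (hgint : Integrable g P) (hcg : Integrable (c * g) P)
    (hmean : P[g] = 0) : P[c * g | m] =ᵐ[P] 0 := by
  filter_upwards [condExp_mul_of_stronglyMeasurable_left hc hcg hgint,
    condExp_indep_eq hm' hm hg hind] with ω hpull hconst
  simp [hpull, hconst, hmean]

omit [IsProbabilityMeasure P] in
theorem stronglyMeasurable_sum_range (hadapt : ∀ n, StronglyMeasurable[ℱ (n + 1)] (ξ n))
    (n : ℕ) : StronglyMeasurable[ℱ n] (∑ k ∈ range n, ξ k) :=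
  Finset.stronglyMeasurable_sum _ fun k hk =>
    (hadapt k).mono (ℱ.mono (Nat.succ_le_of_lt (mem_range.1 hk)))

theorem integral_sq_sum_eq_sum_integral_sq (hL2 : ∀ n, MemLp (ξ n) 2 P)
    (hadapt : ∀ n, StronglyMeasurable[ℱ (n + 1)] (ξ n)) (hcond : ∀ n, P[ξ n | ℱ n] =ᵐ[P] 0)
    (n : ℕ) : ∫ ω, (∑ k ∈ range n, ξ k ω) ^ 2 ∂P = ∑ k ∈ range n, ∫ ω, ξ k ω ^ 2 ∂P := by
  induction n with
  | zero => simp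
  | succ n ih =>
    set S := ∑ k ∈ range n, ξ k
    have hSL2 : MemLp S 2 P := memLp_finsetSum' _ fun k _ => hL2 k
    have hSξint : Integrable (S * ξ n) P := hSL2.integrable_mul (hL2 n)
    have hcross : ∫ ω, (S * ξ n) ω ∂P = 0 := by
      rw [← integral_condExp (ℱ.le n)]
      refine integral_eq_zero_of_ae ?_
      filter_upwards [condExp_mul_of_stronglyMeasurable_left (stronglyMeasurable_sum_range hadapt n)
        hSξint ((hL2 n).integrable one_le_two), hcond n] with ω hpull hzero
      simpa [hzero] using hpull
    have hexpand : ∀ ω, (∑ k ∈ range (n + 1), ξ k ω) ^ 2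
        = (S ω ^ 2 + 2 * (S * ξ n) ω) + ξ n ω ^ 2 := fun ω => by
      simp only [sum_range_succ, S, Finset.sum_apply, Pi.mul_apply]; ring
    have hint : Integrable (fun ω => S ω ^ 2 + 2 * (S * ξ n) ω) P :=
      hSL2.integrable_sq.add (hSξint.const_mul 2)
    simp_rw [hexpand]
    rw [integral_add hint (hL2 n).integrable_sq,
      integral_add hSL2.integrable_sq (hSξint.const_mul 2), integral_const_mul, hcross,
      sum_range_succ, ← ih]
    simp [S, Finset.sum_apply]

theorem eLpNorm_one_le_one_add_integral_sq {f : Ω → ℝ} (hf : MemLp f 2 P) :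
    eLpNorm f 1 P ≤ ENNReal.ofReal (1 + ∫ ω, f ω ^ 2 ∂P) := by
  rw [eLpNorm_one_eq_lintegral_enorm, ← ofReal_integral_norm_eq_lintegral_enorm
    (hf.integrable one_le_two)]
  refine ENNReal.ofReal_le_ofReal ?_
  calc ∫ ω, ‖f ω‖ ∂P ≤ ∫ ω, (1 + f ω ^ 2) ∂P :=
        integral_mono (hf.integrable one_le_two).norm ((integrable_const 1).add hf.integrable_sq)
          fun ω => by nlinarith [sq_nonneg (|f ω| - 1), sq_abs (f ω), Real.norm_eq_abs (f ω)]
    _ = 1 + ∫ ω, f ω ^ 2 ∂P := by rw [integral_add (integrable_const 1) hf.integrable_sq]; simp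

theorem ae_tendsto_sum_of_condExp_eq_zero {K : ℝ}
    (hadapt : ∀ n, StronglyMeasurable[ℱ (n + 1)] (ξ n)) (hcond : ∀ n, P[ξ n | ℱ n] =ᵐ[P] 0)
    (hvar : ∀ n ω, ∑ k ∈ range n, ξ k ω ^ 2 ≤ K) :
    ∀ᵐ ω ∂P, ∃ c, Tendsto (fun n => ∑ k ∈ range n, ξ k ω) atTop (𝓝 c) := by
  have hsq_le : ∀ n ω, ξ n ω ^ 2 ≤ K := fun n ω =>
    (single_le_sum (fun k _ => sq_nonneg (ξ k ω)) (self_mem_range_succ n)).trans (hvar (n + 1) ω)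
  have hL2 : ∀ n, MemLp (ξ n) 2 P := fun n =>
    .of_bound ((hadapt n).mono (ℱ.le _)).aestronglyMeasurable √K
      (ae_of_all _ fun ω => Real.abs_le_sqrt (hsq_le n ω))
  set S : ℕ → Ω → ℝ := fun n => ∑ k ∈ range n, ξ k
  have hSL2 : ∀ n, MemLp (S n) 2 P := fun n => memLp_finsetSum' _ fun k _ => hL2 k
  have hmart : Martingale S ℱ P := by
    refine martingale_of_condExp_sub_eq_zero_nat (stronglyMeasurable_sum_range hadapt)
      (fun n => (hSL2 n).integrable one_le_two) fun n => ?_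
    simpa [S, sum_range_succ] using hcond n
  have hsq : ∀ n, ∫ ω, S n ω ^ 2 ∂P ≤ K := fun n => by
    simp only [S, Finset.sum_apply]
    rw [integral_sq_sum_eq_sum_integral_sq hL2 hadapt hcond,
      ← integral_finsetSum _ fun k _ => (hL2 k).integrable_sq]
    simpa using integral_mono_of_nonneg (ae_of_all _ fun ω => sum_nonneg fun k _ => sq_nonneg _)
      (integrable_const (μ := P) K) (ae_of_all _ (hvar n))
  have hL1 : ∀ n, eLpNorm (S n) 1 P ≤ (1 + K).toNNReal := fun n =>
    (eLpNorm_one_le_one_add_integral_sq (hSL2 n)).trans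
      (ENNReal.ofReal_le_ofReal (by linarith [hsq n]))
  filter_upwards [hmart.submartingale.exists_ae_tendsto_of_bdd hL1] with ω ⟨c, hc⟩
  exact ⟨c, by simpa [S] using hc⟩

end SquareIntegrableMartingale

theorem integral_indicator_le_sub_eq_zero {Ω : Type*} {mΩ : MeasurableSpace Ω} {P : Measure Ω}
    [IsProbabilityMeasure P] {V : Ω → ℝ} (hV : Measurable V)
    (hVdist : P.map V = volume.restrict (Set.Icc 0 1)) {a : ℝ} (ha : a ∈ Set.Icc (0 : ℝ) 1) :
    ∫ ω, ((if V ω ≤ a then 1 else 0) - a) ∂P = 0 := by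
  have hind : (fun ω => if V ω ≤ a then (1 : ℝ) else 0) = (V ⁻¹' Set.Iic a).indicator 1 := rfl
  have hinter : Set.Iic a ∩ Set.Icc 0 1 = Set.Icc 0 a := by
    ext x; simp only [Set.mem_inter_iff, Set.mem_Iic, Set.mem_Icc]
    constructor <;> intro h <;> refine ⟨?_, ?_⟩ <;> try refine ⟨?_, ?_⟩
    all_goals linarith [ha.2, h.1, h.2]
  have hprob : P.real (V ⁻¹' Set.Iic a) = a := by
    rw [← map_measureReal_apply hV measurableSet_Iic, hVdist,
      measureReal_restrict_apply measurableSet_Iic, hinter, Real.volume_real_Icc_of_le ha.1,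
      sub_zero]
  rw [integral_sub _ (integrable_const a), hind, integral_indicator_one (hV measurableSet_Iic),
    hprob]
  · simp
  · rw [hind]; exact (integrable_const 1).indicator (hV measurableSet_Iic)

def stepToward (a u : ℕ) : ℕ := if u < a then u + 1 else if a < u then u - 1 else u

theorem dist_stepToward (a u : ℕ) : Nat.dist (stepToward a u) a = Nat.dist u a - 1 := by
  unfold stepToward Nat.dist; split_ifs <;> omega

theorem eventually_eq_of_eventually_stepToward {x : ℕ → ℕ} {a : ℕ}
    (h : ∀ᶠ n in atTop, x (n + 1) = stepToward a (x n)) : ∀ᶠ n in atTop, x n = a := by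
  obtain ⟨N, hN⟩ := eventually_atTop.1 h
  have hdist : ∀ k, Nat.dist (x (N + k)) a ≤ Nat.dist (x N) a - k := by
    intro k
    induction k with
    | zero => exact le_rfl
    | succ k ih =>
      rw [← add_assoc, hN _ (Nat.le_add_right N k), dist_stepToward]
      omega
  filter_upwards [eventually_ge_atTop (N + Nat.dist (x N) a)] with n hn
  obtain ⟨k, rfl⟩ := Nat.exists_eq_add_of_le (le_of_add_le_left hn)
  exact Nat.eq_of_dist_eq_zero (Nat.eq_zero_of_le_zero ((hdist k).trans (by omega)))

theorem eventually_eq_of_frequently_imp_stepToward {x : ℕ → ℕ} {s : Finset ℕ} {a : ℕ}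
    (hs : ∀ᶠ n in atTop, x n ∈ s)
    (hstep : ∀ u ∈ s, (∃ᶠ n in atTop, x n = u) →
      ∀ᶠ n in atTop, x n = u → x (n + 1) = stepToward a u) :
    ∀ᶠ n in atTop, x n = a := by
  have hall : ∀ᶠ n in atTop, ∀ u ∈ s, x n = u → x (n + 1) = stepToward a u := by
    refine (eventually_all_finset s).2 fun u hu => ?_
    by_cases hrec : ∃ᶠ n in atTop, x n = u
    · exact hstep u hu hrec
    · exact (not_frequently.1 hrec).mono fun n hn hxn => absurd hxn hn
  refine eventually_eq_of_eventually_stepToward ?_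
  filter_upwards [hs, hall] with n hn hstep using hstep (x n) hn rfl

theorem StrictMonoOn.apply_lt_of_lt_of_unique {α β : Type*} [Preorder α] [LinearOrder β]
    {f : α → β} {s : Set α} {a u : α} {lo hi : β} (hf : StrictMonoOn f s) (ha : a ∈ s)
    (hfa : f a < hi) (huniq : ∀ v ∈ s, f v ∈ Set.Icc lo hi → v = a) (hu : u ∈ s) (hua : u < a) :
    f u < lo := by
  by_contra h
  exact hua.ne (huniq u hu ⟨not_lt.1 h, (hf hu ha hua).le.trans hfa.le⟩)

theorem StrictMonoOn.lt_apply_of_lt_of_unique {α β : Type*} [Preorder α] [LinearOrder β]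
    {f : α → β} {s : Set α} {a u : α} {lo hi : β} (hf : StrictMonoOn f s) (ha : a ∈ s)
    (hfa : lo < f a) (huniq : ∀ v ∈ s, f v ∈ Set.Icc lo hi → v = a) (hu : u ∈ s) (hau : a < u) :
    hi < f u := by
  by_contra h
  exact hau.ne' (huniq u hu ⟨hfa.le.trans (hf ha hu hau).le, not_lt.1 h⟩)

namespace IntervalDesign

variable {Ω : Type*} {F : ℕ → ℝ} {U : ℕ → Ω → ℝ} {X : ℕ → Ω → ℕ} {u : ℕ}

theorem visits_succ (n : ℕ) (ω : Ω) :
    visits X u (n + 1) ω = visits X u n ω + if X (n + 1) ω = u then 1 else 0 := by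
  simp only [visits, card_filter]
  exact sum_Icc_succ_top (Nat.le_add_left 1 n) _

theorem visits_mono (ω : Ω) : Monotone (visits X u · ω) := fun _ _ h =>
  card_le_card (filter_subset_filter _ (Icc_subset_Icc_right h))

theorem tendsto_visits_of_frequently {ω : Ω} (h : ∃ᶠ n in atTop, X n ω = u) :
    Tendsto (visits X u · ω) atTop atTop := by
  refine tendsto_atTop_atTop_of_monotone (visits_mono ω) fun k => ?_
  induction k with
  | zero => exact ⟨0, Nat.zero_le _⟩
  | succ k ih =>
    obtain ⟨n, hn⟩ := ih
    obtain ⟨n', hn', hX⟩ := (frequently_atTop.1 h) (n + 1)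
    obtain ⟨j, rfl⟩ := Nat.exists_eq_add_of_lt hn'
    refine ⟨n + j + 1, ?_⟩
    have : visits X u n ω ≤ visits X u (n + j) ω := visits_mono ω (Nat.le_add_right n j)
    rw [visits_succ, if_pos hX]
    omega

/-- Equal to `visits X u i ω` once `u` has been visited; the `max` only avoids dividing by zero. -/
def visitWeight (X : ℕ → Ω → ℕ) (u i : ℕ) (ω : Ω) : ℝ := ((max (visits X u i ω) 1 : ℕ) : ℝ)

def scaledIncr (F : ℕ → ℝ) (U : ℕ → Ω → ℝ) (X : ℕ → Ω → ℕ) (u i : ℕ) (ω : Ω) : ℝ :=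
  (if X i ω = u then 1 else 0) * (resp F U X i ω - F u) / visitWeight X u i ω

theorem one_le_visitWeight (i : ℕ) (ω : Ω) : 1 ≤ visitWeight X u i ω := by
  simp [visitWeight]

theorem visitWeight_mono (ω : Ω) : Monotone (visitWeight X u · ω) := fun _ _ h =>
  Nat.cast_le.2 (max_le_max_right 1 (visits_mono ω h))

theorem abs_resp_sub_le_one (hFu : F u ∈ Set.Icc (0 : ℝ) 1) (i : ℕ) (ω : Ω) :
    |resp F U X i ω - F u| ≤ 1 := by
  unfold resp; split_ifs <;> rw [abs_le] <;> constructor <;> linarith [hFu.1, hFu.2]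

theorem sq_scaledIncr_succ_le (hFu : F u ∈ Set.Icc (0 : ℝ) 1) (n : ℕ) (ω : Ω) :
    scaledIncr F U X u (n + 1) ω ^ 2
      ≤ 2 / (visits X u n ω + 1) - 2 / (visits X u (n + 1) ω + 1) := by
  rw [visits_succ]
  by_cases hX : X (n + 1) ω = u
  · have hweight : visitWeight X u (n + 1) ω = visits X u n ω + 1 := by
      simp [visitWeight, visits_succ, hX]
    set V : ℝ := (visits X u n ω : ℝ)
    have hV : 0 ≤ V := Nat.cast_nonneg _
    have hresp := abs_resp_sub_le_one (U := U) (X := X) hFu (n + 1) ω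
    have hresp2 : (resp F U X (n + 1) ω - F u) ^ 2 ≤ 1 := by
      nlinarith [sq_abs (resp F U X (n + 1) ω - F u), abs_nonneg (resp F U X (n + 1) ω - F u)]
    simp only [scaledIncr, hX, if_true, one_mul, hweight, div_pow]
    push_cast
    calc (resp F U X (n + 1) ω - F u) ^ 2 / (V + 1) ^ 2 ≤ 1 / (V + 1) ^ 2 := by gcongr
      _ ≤ 2 / (V + 1) - 2 / (V + 1 + 1) := by
        rw [div_sub_div _ _ (by positivity) (by positivity), div_le_div_iff₀ (by positivity)
          (by positivity)]
        nlinarith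
  · simp [scaledIncr, hX]

theorem sum_sq_scaledIncr_le_two (hFu : F u ∈ Set.Icc (0 : ℝ) 1) (n : ℕ) (ω : Ω) :
    ∑ k ∈ range n, scaledIncr F U X u (k + 1) ω ^ 2 ≤ 2 := by
  calc ∑ k ∈ range n, scaledIncr F U X u (k + 1) ω ^ 2
      ≤ ∑ k ∈ range n, (2 / ((visits X u k ω : ℝ) + 1) - 2 / ((visits X u (k + 1) ω : ℝ) + 1)) :=
        sum_le_sum fun k _ => sq_scaledIncr_succ_le hFu k ω
    _ = 2 - 2 / ((visits X u n ω : ℝ) + 1) := by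
        rw [sum_range_sub' (fun k => 2 / ((visits X u k ω : ℝ) + 1))]
        simp [visits]
    _ ≤ 2 := by
        have : 0 ≤ 2 / ((visits X u n ω : ℝ) + 1) := by positivity
        linarith

theorem Mart_eq_sum_range (n : ℕ) (ω : Ω) :
    Mart F U X u n ω
      = ∑ k ∈ range n, (if X (k + 1) ω = u then 1 else 0) * (resp F U X (k + 1) ω - F u) := by
  rw [range_eq_Ico, sum_Ico_add' (fun i => (if X i ω = u then (1 : ℝ) else 0) *
    (resp F U X i ω - F u)), zero_add, Ico_add_one_right_eq_Icc]
  rfl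

theorem Mart_div_visits {n : ℕ} {ω : Ω} (h : visits X u n ω ≠ 0) :
    Mart F U X u n ω / visits X u n ω = Fhat F U X u n ω - F u := by
  have hsum : Mart F U X u n ω
      = (∑ i ∈ Icc 1 n, if X i ω = u then resp F U X i ω else 0) - F u * visits X u n ω := by
    rw [Mart, visits, card_filter, Nat.cast_sum, mul_sum, ← sum_sub_distrib]
    refine sum_congr rfl fun i _ => ?_
    split_ifs <;> simp
  rw [hsum, Fhat, sub_div, mul_div_cancel_right₀ _ (Nat.cast_ne_zero.2 h)]

theorem tendsto_Fhat_of_tendsto_visits {ω : Ω} (hvis : Tendsto (visits X u · ω) atTop atTop)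
    (hconv : ∃ c, Tendsto (fun n => ∑ k ∈ range n, scaledIncr F U X u (k + 1) ω) atTop (𝓝 c)) :
    Tendsto (Fhat F U X u · ω) atTop (𝓝 (F u)) := by
  obtain ⟨c, hc⟩ := hconv
  have hweight : Tendsto (visitWeight X u · ω) atTop atTop :=
    tendsto_natCast_atTop_atTop.comp (tendsto_atTop_mono (fun n => le_max_left _ 1) hvis)
  have hkron := tendsto_sum_div_of_tendsto_sum_div
    (a := fun k => (if X (k + 1) ω = u then 1 else 0) * (resp F U X (k + 1) ω - F u))
    (b := fun k => visitWeight X u (k + 1) ω) (one_pos.trans_le (one_le_visitWeight 1 ω))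
    (fun _ _ h => visitWeight_mono ω (Nat.add_le_add_right h 1))
    ((tendsto_add_atTop_iff_nat 1).2 hweight) hc
  rw [← tendsto_sub_nhds_zero_iff, ← tendsto_add_atTop_iff_nat 1]
  refine hkron.congr' ?_
  filter_upwards [((tendsto_add_atTop_iff_nat 1).2 hvis).eventually_ne_atTop 0] with n hn
  rw [← Mart_eq_sum_range, ← Mart_div_visits hn]
  simp [visitWeight, Nat.one_le_iff_ne_zero.2 hn]


theorem eventually_succ_eq_stepToward {m : ℕ} {p Δ₁ Δ₂ : ℝ}
    (hrule : intervalRule m p Δ₁ Δ₂ F U X) {a : ℕ} (ha : a ∈ Set.Icc 1 m) {ω : Ω}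
    (hconv : Tendsto (Fhat F U X u · ω) atTop (𝓝 (F u)))
    (hbelow : u < a → F u < p - Δ₁) (hat : u = a → F u ∈ Set.Ioo (p - Δ₁) (p + Δ₂))
    (habove : a < u → p + Δ₂ < F u) :
    ∀ᶠ n in atTop, X n ω = u → X (n + 1) ω = stepToward a u := by
  rcases lt_trichotomy u a with hlt | rfl | hgt
  · filter_upwards [hconv.eventually_lt_const (hbelow hlt), eventually_ge_atTop 1]
      with n hFhat hn hXn
    have hup := (hrule n hn ω).2.1
    rw [hXn] at hup
    rw [hup hFhat.le, stepToward, if_pos hlt, min_eq_left (by have := ha.2; omega)]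
  · filter_upwards [hconv.eventually_const_lt (hat rfl).1, hconv.eventually_lt_const (hat rfl).2,
      eventually_ge_atTop 1] with n hlo hhi hn hXn
    have hstay := (hrule n hn ω).1
    rw [hXn] at hstay
    simp [hstay hlo hhi, stepToward]
  · filter_upwards [hconv.eventually_const_lt (habove hgt), eventually_ge_atTop 1]
      with n hFhat hn hXn
    have hdown := (hrule n hn ω).2.2
    rw [hXn] at hdown
    rw [hdown hFhat.le, stepToward, if_neg (by omega), if_pos hgt,
      max_eq_left (by have := ha.1; omega)]

section Measurability

variable {𝓂 : MeasurableSpace Ω}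

theorem measurable_resp {i : ℕ} (hU : Measurable[𝓂] (U i)) (hX : Measurable[𝓂] (X i)) :
    Measurable[𝓂] (resp F U X i) :=
  Measurable.ite (measurableSet_le hU (measurable_from_top.comp hX)) measurable_const
    measurable_const

theorem measurable_visits {n : ℕ} (hX : ∀ j ∈ Icc 1 n, Measurable[𝓂] (X j)) :
    Measurable[𝓂] (visits X u n) := by
  rw [show visits X u n = fun ω => ∑ j ∈ Icc 1 n, if X j ω = u then 1 else 0 from
    funext fun ω => card_filter _ _]
  exact Finset.measurable_sum _ fun j hj =>
    Measurable.ite (hX j hj (measurableSet_singleton u)) measurable_const measurable_const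

theorem measurable_visitWeight {n : ℕ} (hX : ∀ j ∈ Icc 1 n, Measurable[𝓂] (X j)) :
    Measurable[𝓂] (visitWeight X u n) :=
  (measurable_from_top (f := fun k : ℕ => ((max k 1 : ℕ) : ℝ))).comp (measurable_visits hX)

theorem measurable_Fhat {n : ℕ} (hU : ∀ j ∈ Icc 1 n, Measurable[𝓂] (U j))
    (hX : ∀ j ∈ Icc 1 n, Measurable[𝓂] (X j)) : Measurable[𝓂] (Fhat F U X u n) := by
  refine Measurable.div ?_ (measurable_from_top.comp (measurable_visits hX))
  exact Finset.measurable_sum _ fun j hj => Measurable.ite (hX j hj (measurableSet_singleton u))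
    (measurable_resp (hU j hj) (hX j hj)) measurable_const

theorem measurable_scaledIncr {i : ℕ} (hU : Measurable[𝓂] (U i))
    (hX : ∀ j ∈ Icc 1 i, Measurable[𝓂] (X j)) (hi : 1 ≤ i) :
    Measurable[𝓂] (scaledIncr F U X u i) := by
  have hXi := hX i (mem_Icc.2 ⟨hi, le_rfl⟩)
  exact ((Measurable.ite (hXi (measurableSet_singleton u)) measurable_const measurable_const).mul
    ((measurable_resp hU hXi).sub measurable_const)).div (measurable_visitWeight hX)

theorem measurable_succ_of_intervalRule {m : ℕ} {p Δ₁ Δ₂ : ℝ}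
    (hrule : intervalRule m p Δ₁ Δ₂ F U X) {n : ℕ} (hn : 1 ≤ n)
    (hU : ∀ j ∈ Icc 1 n, Measurable[𝓂] (U j)) (hX : ∀ j ∈ Icc 1 n, Measurable[𝓂] (X j)) :
    Measurable[𝓂] (X (n + 1)) := by
  have hXn := hX n (mem_Icc.2 ⟨hn, le_rfl⟩)
  have hG : Measurable[𝓂] fun ω => Fhat F U X (X n ω) n ω :=
    (measurable_from_prod_countable_left (f := fun q : Ω × ℕ => Fhat F U X q.2 n q.1)
      fun _ => measurable_Fhat hU hX).comp (measurable_id.prodMk hXn)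
  have hstep : X (n + 1) = fun ω =>
      if Fhat F U X (X n ω) n ω ≤ p - Δ₁ then min (X n ω + 1) m
      else if p + Δ₂ ≤ Fhat F U X (X n ω) n ω then max (X n ω - 1) 1 else X n ω := by
    funext ω
    obtain ⟨hstay, hup, hdown⟩ := hrule n hn ω
    split_ifs with h₁ h₂
    · exact hup h₁
    · exact hdown h₂
    · exact hstay (not_le.1 h₁) (not_le.1 h₂)
  rw [hstep]
  exact Measurable.ite (measurableSet_le hG measurable_const)
    ((measurable_from_top (f := fun k => min (k + 1) m)).comp hXn)
    (Measurable.ite (measurableSet_le measurable_const hG)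
      ((measurable_from_top (f := fun k => max (k - 1) 1)).comp hXn) hXn)

end Measurability

variable [MeasurableSpace Ω] {P : Measure Ω} (hU : ∀ i, Measurable (U i))

theorem measurable_natFilt_U {i n : ℕ} (hi : i ∈ Icc 1 n) : Measurable[natFilt U hU n] (U i) :=
  measurable_iff_comap_le.2 (le_iSup₂_of_le i hi le_rfl)

theorem measurable_natFilt_of_intervalRule {m : ℕ} {p Δ₁ Δ₂ : ℝ} {x₀ : ℕ}
    (hrule : intervalRule m p Δ₁ Δ₂ F U X) (hX1 : ∀ ω, X 1 ω = x₀) (n : ℕ) :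
    ∀ j ∈ Icc 1 (n + 1), Measurable[natFilt U hU n] (X j) := by
  induction n with
  | zero =>
    intro j hj
    obtain rfl : j = 1 := by simp at hj; omega
    simp only [funext hX1, measurable_const]
  | succ n ih =>
    intro j hj
    rcases (mem_Icc.1 hj).2.lt_or_eq with hlt | rfl
    · exact (ih j (mem_Icc.2 ⟨(mem_Icc.1 hj).1, Nat.lt_succ_iff.1 hlt⟩)).mono
        ((natFilt U hU).mono n.le_succ) le_rfl
    · exact measurable_succ_of_intervalRule hrule (Nat.le_add_left 1 n)
        (fun j hj => measurable_natFilt_U hU hj) fun j hj =>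
          (ih j hj).mono ((natFilt U hU).mono n.le_succ) le_rfl

theorem indep_comap_natFilt (hUindep : iIndepFun U P) (n : ℕ) :
    Indep (MeasurableSpace.comap (U (n + 1)) inferInstance) (natFilt U hU n) P := by
  have hsplit := indep_biSup_compl (fun i => (hU i).comap_le) hUindep {n + 1}
  rw [_root_.iSup_singleton] at hsplit
  refine indep_of_indep_of_le_right hsplit (iSup₂_le fun i hi => le_iSup₂_of_le i ?_ le_rfl)
  simp only [Set.mem_compl_iff, Set.mem_singleton_iff]
  exact (Nat.lt_succ_of_le (mem_Icc.1 hi).2).ne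

variable [IsProbabilityMeasure P]

theorem condExp_scaledIncr_succ (hUindep : iIndepFun U P)
    (hUdist : ∀ i, P.map (U i) = volume.restrict (Set.Icc 0 1))
    (hXpred : ∀ n, ∀ j ∈ Icc 1 (n + 1), Measurable[natFilt U hU n] (X j))
    (hFu : F u ∈ Set.Icc (0 : ℝ) 1) (n : ℕ) :
    P[scaledIncr F U X u (n + 1) | natFilt U hU n] =ᵐ[P] 0 := by
  set c : Ω → ℝ := fun ω => (if X (n + 1) ω = u then 1 else 0) / visitWeight X u (n + 1) ω
  set g : Ω → ℝ := fun ω => (if U (n + 1) ω ≤ F u then 1 else 0) - F u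
  have hdecomp : scaledIncr F U X u (n + 1) = c * g := by
    funext ω
    by_cases h : X (n + 1) ω = u
    · simp only [scaledIncr, resp, c, g, h, Pi.mul_apply, if_true]; ring
    · simp [scaledIncr, c, h]
  have hcmeas : Measurable[natFilt U hU n] c :=
    (Measurable.ite (hXpred n (n + 1) (right_mem_Icc.2 (Nat.le_add_left 1 n))
      (measurableSet_singleton u)) measurable_const measurable_const).div
      (measurable_visitWeight (hXpred n))
  have hgmeas : Measurable[MeasurableSpace.comap (U (n + 1)) inferInstance] g :=
    (Measurable.ite (comap_measurable (U (n + 1)) measurableSet_Iic) measurable_const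
      measurable_const).sub measurable_const
  have hgint : Integrable g P := .of_bound (hgmeas.mono (hU _).comap_le le_rfl).aestronglyMeasurable
    1 (ae_of_all _ fun ω => by
      simp only [g, Real.norm_eq_abs]
      split_ifs <;> rw [abs_le] <;> constructor <;> linarith [hFu.1, hFu.2])
  have hcbdd : ∀ ω, ‖c ω‖ ≤ 1 := fun ω => by
    have hw := one_le_visitWeight (X := X) (u := u) (n + 1) ω
    simp only [c, Real.norm_eq_abs, abs_div, abs_of_pos (one_pos.trans_le hw),
      div_le_one (one_pos.trans_le hw)]
    split_ifs <;> simp <;> linarith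
  have hcg : Integrable (c * g) P :=
    hgint.bdd_mul (hcmeas.mono ((natFilt U hU).le n) le_rfl).aestronglyMeasurable
      (ae_of_all _ hcbdd)
  rw [hdecomp]
  exact condExp_mul_eq_zero_of_indep ((natFilt U hU).le n) (hU (n + 1)).comap_le
    (indep_comap_natFilt hU hUindep n) hcmeas.stronglyMeasurable hgmeas.stronglyMeasurable hgint hcg
    (integral_indicator_le_sub_eq_zero (hU (n + 1)) (hUdist (n + 1)) hFu)

theorem ae_tendsto_sum_scaledIncr (hUindep : iIndepFun U P)
    (hUdist : ∀ i, P.map (U i) = volume.restrict (Set.Icc 0 1))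
    (hXpred : ∀ n, ∀ j ∈ Icc 1 (n + 1), Measurable[natFilt U hU n] (X j))
    (hFu : F u ∈ Set.Icc (0 : ℝ) 1) :
    ∀ᵐ ω ∂P, ∃ c, Tendsto (fun n => ∑ k ∈ range n, scaledIncr F U X u (k + 1) ω) atTop (𝓝 c) :=
  ae_tendsto_sum_of_condExp_eq_zero (ℱ := natFilt U hU)
    (fun n => (measurable_scaledIncr
      (measurable_natFilt_U hU (right_mem_Icc.2 (Nat.le_add_left 1 n)))
      (fun j hj => (hXpred n j hj).mono ((natFilt U hU).mono n.le_succ) le_rfl)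
      (Nat.le_add_left 1 n)).stronglyMeasurable)
    (condExp_scaledIncr_succ hU hUindep hUdist hXpred hFu) (sum_sq_scaledIncr_le_two hFu)

end IntervalDesign

theorem interval_design_converges_to_MTD_general
    {Ω : Type*} [MeasurableSpace Ω] (P : Measure Ω) [IsProbabilityMeasure P]
    (m : ℕ)
    (F : ℕ → ℝ) (hFmono : StrictMonoOn F (Set.Icc 1 m))
    (hF01 : ∀ v ∈ Set.Icc 1 m, F v ∈ Set.Icc (0:ℝ) 1)
    (U : ℕ → Ω → ℝ) (hUmeas : ∀ i, Measurable (U i))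
    (hUindep : iIndepFun U P)
    (hUdist : ∀ i, Measure.map (U i) P = volume.restrict (Set.Icc (0:ℝ) 1))
    (X : ℕ → Ω → ℕ)
    (hXrange : ∀ i, 1 ≤ i → ∀ ω, X i ω ∈ Set.Icc 1 m)
    (x₀ : ℕ) (hX1 : ∀ ω, X 1 ω = x₀)
    (p Δ₁ Δ₂ : ℝ)
    (hrule : intervalRule m p Δ₁ Δ₂ F U X)
    (ustar : ℕ) (hustar : ustar ∈ Set.Icc 1 m)
    (hin : F ustar ∈ Set.Ioo (p - Δ₁) (p + Δ₂))
    (huniq : ∀ u ∈ Set.Icc 1 m, F u ∈ Set.Icc (p - Δ₁) (p + Δ₂) → u = ustar) :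
    ∀ᵐ ω ∂P, ∃ N, ∀ n, N ≤ n → X n ω = ustar := by
  have hXpred := IntervalDesign.measurable_natFilt_of_intervalRule hUmeas hrule hX1
  have hconv : ∀ᵐ ω ∂P, ∀ u ∈ Icc 1 m, ∃ c,
      Tendsto (fun n => ∑ k ∈ range n, IntervalDesign.scaledIncr F U X u (k + 1) ω) atTop (𝓝 c) :=
    (eventually_all_finset _).2 fun u hu => IntervalDesign.ae_tendsto_sum_scaledIncr hUmeas
      hUindep hUdist hXpred (hF01 u (by simpa using hu))
  filter_upwards [hconv] with ω hω
  refine eventually_atTop.1 (eventually_eq_of_frequently_imp_stepToward (s := Icc 1 m) ?_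
    fun u hu hrec => ?_)
  · filter_upwards [eventually_ge_atTop 1] with n hn
    simpa using hXrange n hn ω
  · have hu' : u ∈ Set.Icc 1 m := by simpa using hu
    have hFhat := IntervalDesign.tendsto_Fhat_of_tendsto_visits
      (IntervalDesign.tendsto_visits_of_frequently hrec) (hω u hu)
    exact IntervalDesign.eventually_succ_eq_stepToward hrule hustar hFhat
      (hFmono.apply_lt_of_lt_of_unique hustar hin.2 huniq hu') (fun h => h ▸ hin)
      (hFmono.lt_apply_of_lt_of_unique hustar hin.1 huniq hu')

/-- **Theorem 1(i), interval-design convergence.** If `F(u*) ∈ (p−Δ₁, p+Δ₂)`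
and `u*` is the unique level whose `F` value lies in the closed interval `[p−Δ₁, p+Δ₂]`,
then the dose allocations of the interval design converge almost surely to the MTD `u*`. -/
theorem interval_design_converges_to_MTD
    {Ω : Type*} [MeasurableSpace Ω] (P : Measure Ω) [IsProbabilityMeasure P]
    (m : ℕ) (hm : 1 ≤ m)
    (F : ℕ → ℝ) (hFmono : StrictMonoOn F (Set.Icc 1 m))
    (hF01 : ∀ v ∈ Set.Icc 1 m, F v ∈ Set.Icc (0:ℝ) 1)
    (U : ℕ → Ω → ℝ) (hUmeas : ∀ i, Measurable (U i))
    (hUindep : iIndepFun U P)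
    (hUdist : ∀ i, Measure.map (U i) P = volume.restrict (Set.Icc (0:ℝ) 1))
    (X : ℕ → Ω → ℕ) (hXmeas : ∀ i, Measurable (X i))
    (hXrange : ∀ i, 1 ≤ i → ∀ ω, X i ω ∈ Set.Icc 1 m)
    (x₀ : ℕ) (hx₀ : x₀ ∈ Set.Icc 1 m) (hX1 : ∀ ω, X 1 ω = x₀)
    (p Δ₁ Δ₂ : ℝ) (hp : p ∈ Set.Ioo (0:ℝ) 1) (hΔ₁ : 0 < Δ₁) (hΔ₂ : 0 < Δ₂)
    (hrule : intervalRule m p Δ₁ Δ₂ F U X)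
    (ustar : ℕ) (hustar : ustar ∈ Set.Icc 1 m)
    (hMTD : ∀ u ∈ Set.Icc 1 m, |F ustar - p| ≤ |F u - p|)
    (hin : F ustar ∈ Set.Ioo (p - Δ₁) (p + Δ₂))
    (huniq : ∀ u ∈ Set.Icc 1 m, F u ∈ Set.Icc (p - Δ₁) (p + Δ₂) → u = ustar) :
    ∀ᵐ ω ∂P, ∃ N, ∀ n, N ≤ n → X n ω = ustar :=
  interval_design_converges_to_MTD_general P m F hFmono hF01 U hUmeas hUindep hUdist X hXrange x₀
    hX1 p Δ₁ Δ₂ hrule ustar hustar hin huniq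
end
end

section
/- (Theorem 1(ii), upper boundary case.) Consider the interval design with target p ∈ (0,1) and margins Δp₁, Δp₂ > 0. If F(m) ≤ p−Δp₁ (so that the MTD is u* = m), then almost surely there exists N such that X_n = m for all n ≥ N. -/
open MeasureTheory ProbabilityTheory Filter

noncomputable section

/-!
For a level `u`, the normalised sums `∑_{i ≤ n} 1{X_i = u} (Y_i - F u) / n_u(i)` form the
martingale transform of the centred innovations `1{U_i ≤ F u} - F u`, which are independent of
the past, by the predictable weights `1{X_i = u} / n_u(i)`. The squared weights sum to at most
`∑ 1/k² ≤ 2`, so the transform is bounded in `L²` and converges almost surely; Kronecker's lemma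
then gives `F̂_n(u) → F(u)` whenever `u` is visited infinitely often.

On such an outcome some level is visited infinitely often. At a recurrent level `v < m` the
empirical rate eventually stays below `p - Δ₁` (as `F v < F m ≤ p - Δ₁`), so the design escalates
infinitely often and `v + 1` is recurrent too; hence `m` is recurrent. At `m` the empirical rate
eventually stays below `p + Δ₂`, so once the design is at `m` late enough it never leaves.
-/

open Finset Topology Asymptotics

lemma sum_Icc_one_eq_sum_range {M : Type*} [AddCommMonoid M] (f : ℕ → M) (n : ℕ) :
    ∑ i ∈ Icc 1 n, f i = ∑ i ∈ range n, f (i + 1) := by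
  rw [← Ico_add_one_right_eq_Icc, sum_Ico_eq_sum_range]
  simp [add_comm]

lemma tendsto_sum_mul_div_sum {w g : ℕ → ℝ} {L : ℝ} (hw : ∀ i, 0 ≤ w i)
    (hw_top : Tendsto (fun n => ∑ i ∈ Icc 1 n, w i) atTop atTop) (hg : Tendsto g atTop (𝓝 L)) :
    Tendsto (fun n => (∑ i ∈ Icc 1 n, w i * g i) / ∑ i ∈ Icc 1 n, w i) atTop (𝓝 L) := by
  have hsmall : (fun n => ∑ i ∈ Icc 1 n, w i * (g i - L)) =o[atTop]
      fun n => ∑ i ∈ Icc 1 n, w i := by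
    simp only [sum_Icc_one_eq_sum_range] at hw_top ⊢
    refine IsLittleO.sum_range ?_ (fun i => hw _) hw_top
    have hg' : Tendsto (fun i => g (i + 1) - L) atTop (𝓝 0) := by
      simpa using (hg.comp (tendsto_add_atTop_nat 1)).sub_const L
    simpa using (isBigO_refl (fun i => w (i + 1)) atTop).mul_isLittleO
      ((isLittleO_one_iff ℝ).2 hg')
  have hlim : Tendsto (fun n => L + (∑ i ∈ Icc 1 n, w i * (g i - L)) / ∑ i ∈ Icc 1 n, w i)
      atTop (𝓝 L) := by
    simpa using hsmall.tendsto_div_nhds_zero.const_add L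
  refine hlim.congr' ?_
  filter_upwards [hw_top.eventually_gt_atTop 0] with n hn
  rw [add_div' _ _ _ hn.ne']
  simp only [mul_sub, sum_sub_distrib, ← sum_mul]
  ring

lemma tendsto_sum_div_of_tendsto_sum_div_s7 {x b : ℕ → ℝ} {L : ℝ} (hb : Monotone b)
    (hb_top : Tendsto b atTop atTop) (hx : ∀ i, 0 < i → b i = 0 → x i = 0)
    (hL : Tendsto (fun n => ∑ i ∈ Icc 1 n, x i / b i) atTop (𝓝 L)) :
    Tendsto (fun n => (∑ i ∈ Icc 1 n, x i) / b n) atTop (𝓝 0) := by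
  set N := fun n => ∑ i ∈ Icc 1 n, x i / b i with hN
  have abel : ∀ n, ∑ i ∈ Icc 1 n, x i
      = b n * N n - ∑ i ∈ Icc 1 n, (b i - b (i - 1)) * N (i - 1) := by
    intro n
    induction n with
    | zero => simp [hN]
    | succ n ih =>
      have hxn : b (n + 1) * (x (n + 1) / b (n + 1)) = x (n + 1) := by
        rcases eq_or_ne (b (n + 1)) 0 with h | h
        · simp [h, hx _ n.succ_pos h]
        · field_simp
      simp only [hN, sum_Icc_succ_top (Nat.le_add_left 1 n), Nat.add_sub_cancel] at ih ⊢
      rw [ih]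
      linear_combination -hxn
  have hw_sum : ∀ n, ∑ i ∈ Icc 1 n, (b i - b (i - 1)) = b n - b 0 := by
    intro n
    simpa [sum_Icc_one_eq_sum_range] using sum_range_sub b n
  have hces : Tendsto (fun n => (∑ i ∈ Icc 1 n, (b i - b (i - 1)) * N (i - 1)) / (b n - b 0))
      atTop (𝓝 L) := by
    simpa only [hw_sum, Function.comp_apply] using
      tendsto_sum_mul_div_sum (fun i => sub_nonneg.2 (hb (i.sub_le 1)))
      ((tendsto_atTop_add_const_right _ (-b 0) hb_top).congr fun n => by rw [hw_sum]; ring)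
      (hL.comp (tendsto_sub_atTop_nat 1))
  have hratio : Tendsto (fun n => (b n - b 0) / b n) atTop (𝓝 1) := by
    have h : Tendsto (fun n => 1 - b 0 / b n) atTop (𝓝 1) := by
      simpa using ((tendsto_const_nhds (x := b 0)).div_atTop hb_top).const_sub 1
    refine h.congr' ?_
    filter_upwards [hb_top.eventually_gt_atTop 0] with n hn
    field_simp
  have h := hL.sub (hces.mul hratio)
  rw [mul_one, sub_self] at h
  refine h.congr' ?_
  filter_upwards [hb_top.eventually_gt_atTop 0, hb_top.eventually_gt_atTop (b 0)] with n hn hn'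
  rw [abel n]
  field_simp [sub_ne_zero.2 hn'.ne']

section MartingaleTransform

variable {Ω : Type*} {G ξ : ℕ → Ω → ℝ} {C : ℝ}

def martingaleTransform (G ξ : ℕ → Ω → ℝ) (n : ℕ) (ω : Ω) : ℝ :=
  ∑ i ∈ Icc 1 n, G i ω * ξ i ω

lemma martingaleTransform_zero : martingaleTransform G ξ 0 = 0 := by
  funext ω
  simp [martingaleTransform]

lemma martingaleTransform_succ (n : ℕ) :
    martingaleTransform G ξ (n + 1) = martingaleTransform G ξ n + G (n + 1) * ξ (n + 1) := by
  funext ω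
  simp [martingaleTransform, sum_Icc_succ_top]

lemma abs_le_sqrt_of_sum_sq_le (hG_sq : ∀ n ω, ∑ i ∈ Icc 1 n, G i ω ^ 2 ≤ C) (n : ℕ) (ω : Ω) :
    |G (n + 1) ω| ≤ √C :=
  Real.abs_le_sqrt <| (single_le_sum (fun i _ => sq_nonneg (G i ω))
    (right_mem_Icc.2 n.succ_pos)).trans (hG_sq (n + 1) ω)

variable [mΩ : MeasurableSpace Ω] {P : Measure Ω} {ℱ : Filtration ℕ mΩ}

lemma adapted_martingaleTransform (hG : ∀ n, Measurable[ℱ n] (G (n + 1)))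
    (hξ : ∀ n, Measurable[ℱ (n + 1)] (ξ (n + 1))) : Adapted ℱ (martingaleTransform G ξ) := by
  intro n
  induction n with
  | zero => rw [martingaleTransform_zero]; exact measurable_const
  | succ n ih =>
    rw [martingaleTransform_succ]
    have hle := ℱ.mono n.le_succ
    exact (ih.mono hle le_rfl).add (((hG n).mono hle le_rfl).mul (hξ n))

lemma integral_mul_eq_zero_of_indep {n : ℕ} {f : Ω → ℝ} (hf : Measurable[ℱ n] f)
    (hξm : Measurable (ξ (n + 1)))
    (hindep : Indep (ℱ n) (MeasurableSpace.comap (ξ (n + 1)) inferInstance) P)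
    (hξ_mean : ∫ ω, ξ (n + 1) ω ∂P = 0) :
    ∫ ω, f ω * ξ (n + 1) ω ∂P = 0 := by
  have hfξ : IndepFun f (ξ (n + 1)) P := indep_of_indep_of_le_left hindep hf.comap_le
  have := hfξ.integral_mul_eq_mul_integral (hf.mono (ℱ.le n) le_rfl).aestronglyMeasurable
    hξm.aestronglyMeasurable
  simpa [hξ_mean] using this

variable [IsProbabilityMeasure P]

lemma memLp_of_sum_sq_le (hG : ∀ n, Measurable[ℱ n] (G (n + 1)))
    (hG_sq : ∀ n ω, ∑ i ∈ Icc 1 n, G i ω ^ 2 ≤ C) (n : ℕ) : MemLp (G (n + 1)) 2 P :=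
  .of_bound ((hG n).mono (ℱ.le n) le_rfl).aestronglyMeasurable √C
    (ae_of_all _ fun ω => by simpa using abs_le_sqrt_of_sum_sq_le hG_sq n ω)

lemma memLp_martingaleTransform_increment (hG : ∀ n, Measurable[ℱ n] (G (n + 1)))
    (hξ : ∀ n, Measurable[ℱ (n + 1)] (ξ (n + 1))) (hξ_bdd : ∀ n ω, |ξ (n + 1) ω| ≤ 1)
    (hG_sq : ∀ n ω, ∑ i ∈ Icc 1 n, G i ω ^ 2 ≤ C) (n : ℕ) :
    MemLp (G (n + 1) * ξ (n + 1)) 2 P := by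
  refine MemLp.of_bound (((hG n).mono (ℱ.le n) le_rfl).mul
    ((hξ n).mono (ℱ.le (n + 1)) le_rfl)).aestronglyMeasurable √C (ae_of_all _ fun ω => ?_)
  simpa [abs_mul] using mul_le_mul (abs_le_sqrt_of_sum_sq_le hG_sq n ω) (hξ_bdd n ω)
    (abs_nonneg _) (Real.sqrt_nonneg C)

lemma memLp_martingaleTransform (hG : ∀ n, Measurable[ℱ n] (G (n + 1)))
    (hξ : ∀ n, Measurable[ℱ (n + 1)] (ξ (n + 1))) (hξ_bdd : ∀ n ω, |ξ (n + 1) ω| ≤ 1)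
    (hG_sq : ∀ n ω, ∑ i ∈ Icc 1 n, G i ω ^ 2 ≤ C) (n : ℕ) :
    MemLp (martingaleTransform G ξ n) 2 P := by
  induction n with
  | zero => rw [martingaleTransform_zero]; exact MemLp.zero
  | succ n ih =>
    rw [martingaleTransform_succ]
    exact ih.add (memLp_martingaleTransform_increment hG hξ hξ_bdd hG_sq n)

lemma martingale_martingaleTransform (hG : ∀ n, Measurable[ℱ n] (G (n + 1)))
    (hξ : ∀ n, Measurable[ℱ (n + 1)] (ξ (n + 1)))
    (hindep : ∀ n, Indep (ℱ n) (MeasurableSpace.comap (ξ (n + 1)) inferInstance) P)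
    (hξ_bdd : ∀ n ω, |ξ (n + 1) ω| ≤ 1) (hξ_mean : ∀ n, ∫ ω, ξ (n + 1) ω ∂P = 0)
    (hG_sq : ∀ n ω, ∑ i ∈ Icc 1 n, G i ω ^ 2 ≤ C) :
    Martingale (martingaleTransform G ξ) ℱ P := by
  refine martingale_of_condExp_sub_eq_zero_nat
    (fun n => (adapted_martingaleTransform hG hξ n).stronglyMeasurable)
    (fun n => (memLp_martingaleTransform hG hξ hξ_bdd hG_sq n).integrable one_le_two) fun n => ?_
  rw [martingaleTransform_succ, add_sub_cancel_left]
  have hξ_int : Integrable (ξ (n + 1)) P :=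
    .of_bound ((hξ n).mono (ℱ.le (n + 1)) le_rfl).aestronglyMeasurable 1 (ae_of_all _ (hξ_bdd n))
  have hpast : P[ξ (n + 1) | ℱ n] =ᵐ[P] fun _ => 0 := by
    simpa [hξ_mean n] using condExp_indep_eq ((hξ n).mono (ℱ.le (n + 1)) le_rfl).comap_le
      (ℱ.le n) (comap_measurable (ξ (n + 1))).stronglyMeasurable (hindep n).symm
  filter_upwards [condExp_stronglyMeasurable_mul_of_bound (ℱ.le n) (hG n).stronglyMeasurable
    hξ_int √C (ae_of_all _ fun ω => by simpa using abs_le_sqrt_of_sum_sq_le hG_sq n ω),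
    hpast] with ω hmul hzero
  simp [hmul, hzero]

lemma integral_sq_martingaleTransform_succ_le (hG : ∀ n, Measurable[ℱ n] (G (n + 1)))
    (hξ : ∀ n, Measurable[ℱ (n + 1)] (ξ (n + 1)))
    (hindep : ∀ n, Indep (ℱ n) (MeasurableSpace.comap (ξ (n + 1)) inferInstance) P)
    (hξ_bdd : ∀ n ω, |ξ (n + 1) ω| ≤ 1) (hξ_mean : ∀ n, ∫ ω, ξ (n + 1) ω ∂P = 0)
    (hG_sq : ∀ n ω, ∑ i ∈ Icc 1 n, G i ω ^ 2 ≤ C) (n : ℕ) :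
    ∫ ω, martingaleTransform G ξ (n + 1) ω ^ 2 ∂P
      ≤ ∫ ω, martingaleTransform G ξ n ω ^ 2 ∂P + ∫ ω, G (n + 1) ω ^ 2 ∂P := by
  set S := martingaleTransform G ξ n
  have hS : MemLp S 2 P := memLp_martingaleTransform hG hξ hξ_bdd hG_sq n
  have hΔ : MemLp (G (n + 1) * ξ (n + 1)) 2 P :=
    memLp_martingaleTransform_increment hG hξ hξ_bdd hG_sq n
  have hcross : ∫ ω, S ω * G (n + 1) ω * ξ (n + 1) ω ∂P = 0 :=
    integral_mul_eq_zero_of_indep ((adapted_martingaleTransform hG hξ n).mul (hG n))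
      ((hξ n).mono (ℱ.le (n + 1)) le_rfl) (hindep n) (hξ_mean n)
  have hcross_int : Integrable (fun ω => 2 * (S ω * G (n + 1) ω * ξ (n + 1) ω)) P :=
    (hS.integrable_mul hΔ).const_mul 2 |>.congr (ae_of_all _ fun ω => by simp [mul_assoc])
  have hexpand : ∀ ω, martingaleTransform G ξ (n + 1) ω ^ 2
      = S ω ^ 2 + 2 * (S ω * G (n + 1) ω * ξ (n + 1) ω) + (G (n + 1) ω * ξ (n + 1) ω) ^ 2 := by
    intro ω
    rw [martingaleTransform_succ]
    simp only [Pi.add_apply, Pi.mul_apply, S]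
    ring
  have hinc : ∀ ω, (G (n + 1) ω * ξ (n + 1) ω) ^ 2 ≤ G (n + 1) ω ^ 2 := fun ω => by
    rw [mul_pow]
    exact mul_le_of_le_one_right (sq_nonneg _) (sq_le_one_iff_abs_le_one _ |>.2 (hξ_bdd n ω))
  calc ∫ ω, martingaleTransform G ξ (n + 1) ω ^ 2 ∂P
      = ∫ ω, S ω ^ 2 ∂P + ∫ ω, (G (n + 1) ω * ξ (n + 1) ω) ^ 2 ∂P := by
        simp_rw [hexpand]
        rw [integral_add, integral_add hS.integrable_sq hcross_int, integral_const_mul, hcross,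
          mul_zero, add_zero]
        · exact hS.integrable_sq.add hcross_int
        · exact hΔ.integrable_sq
    _ ≤ ∫ ω, S ω ^ 2 ∂P + ∫ ω, G (n + 1) ω ^ 2 ∂P :=
        add_le_add le_rfl (integral_mono hΔ.integrable_sq
          (memLp_of_sum_sq_le hG hG_sq n).integrable_sq hinc)

lemma integral_sq_martingaleTransform_le (hG : ∀ n, Measurable[ℱ n] (G (n + 1)))
    (hξ : ∀ n, Measurable[ℱ (n + 1)] (ξ (n + 1)))
    (hindep : ∀ n, Indep (ℱ n) (MeasurableSpace.comap (ξ (n + 1)) inferInstance) P)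
    (hξ_bdd : ∀ n ω, |ξ (n + 1) ω| ≤ 1) (hξ_mean : ∀ n, ∫ ω, ξ (n + 1) ω ∂P = 0)
    (hG_sq : ∀ n ω, ∑ i ∈ Icc 1 n, G i ω ^ 2 ≤ C) (n : ℕ) :
    ∫ ω, martingaleTransform G ξ n ω ^ 2 ∂P ≤ ∫ ω, ∑ i ∈ Icc 1 n, G i ω ^ 2 ∂P := by
  induction n with
  | zero => simp [martingaleTransform_zero]
  | succ n ih =>
    have hsum : Integrable (fun ω => ∑ i ∈ Icc 1 n, G i ω ^ 2) P := by
      refine integrable_finsetSum _ fun i hi => ?_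
      obtain ⟨k, rfl⟩ := Nat.exists_eq_add_of_le' (mem_Icc.1 hi).1
      exact (memLp_of_sum_sq_le hG hG_sq k).integrable_sq
    calc ∫ ω, martingaleTransform G ξ (n + 1) ω ^ 2 ∂P
        ≤ ∫ ω, martingaleTransform G ξ n ω ^ 2 ∂P + ∫ ω, G (n + 1) ω ^ 2 ∂P :=
          integral_sq_martingaleTransform_succ_le hG hξ hindep hξ_bdd hξ_mean hG_sq n
      _ ≤ ∫ ω, ∑ i ∈ Icc 1 n, G i ω ^ 2 ∂P + ∫ ω, G (n + 1) ω ^ 2 ∂P := by gcongr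
      _ = ∫ ω, ∑ i ∈ Icc 1 (n + 1), G i ω ^ 2 ∂P := by
          simp_rw [sum_Icc_succ_top (Nat.le_add_left 1 n)]
          exact (integral_add hsum (memLp_of_sum_sq_le hG hG_sq n).integrable_sq).symm

lemma ae_exists_tendsto_martingaleTransform (hG : ∀ n, Measurable[ℱ n] (G (n + 1)))
    (hξ : ∀ n, Measurable[ℱ (n + 1)] (ξ (n + 1)))
    (hindep : ∀ n, Indep (ℱ n) (MeasurableSpace.comap (ξ (n + 1)) inferInstance) P)
    (hξ_bdd : ∀ n ω, |ξ (n + 1) ω| ≤ 1) (hξ_mean : ∀ n, ∫ ω, ξ (n + 1) ω ∂P = 0)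
    (hG_sq : ∀ n ω, ∑ i ∈ Icc 1 n, G i ω ^ 2 ≤ C) :
    ∀ᵐ ω ∂P, ∃ c, Tendsto (fun n => martingaleTransform G ξ n ω) atTop (𝓝 c) := by
  refine (martingale_martingaleTransform hG hξ hindep hξ_bdd hξ_mean hG_sq).submartingale
    |>.exists_ae_tendsto_of_bdd (R := ((1 + C) / 2).toNNReal) fun n => ?_
  have hS := memLp_martingaleTransform (P := P) hG hξ hξ_bdd hG_sq n
  have hint := hS.integrable one_le_two
  rw [eLpNorm_one_eq_lintegral_enorm, ← ofReal_integral_norm_eq_lintegral_enorm hint]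
  refine ENNReal.ofReal_le_ofReal ?_
  calc ∫ ω, ‖martingaleTransform G ξ n ω‖ ∂P
      ≤ ∫ ω, (1 + martingaleTransform G ξ n ω ^ 2) / 2 ∂P := by
        refine integral_mono hint.norm ((integrable_const 1).add hS.integrable_sq |>.div_const 2)
          fun ω => ?_
        rw [Real.norm_eq_abs]
        nlinarith [sq_nonneg (|martingaleTransform G ξ n ω| - 1),
          sq_abs (martingaleTransform G ξ n ω)]
    _ = (1 + ∫ ω, martingaleTransform G ξ n ω ^ 2 ∂P) / 2 := by
        rw [integral_div, integral_add (integrable_const 1) hS.integrable_sq]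
        simp
    _ ≤ (1 + C) / 2 := by
        gcongr
        refine (integral_sq_martingaleTransform_le hG hξ hindep hξ_bdd hξ_mean hG_sq n).trans ?_
        simpa using integral_mono_of_nonneg (μ := P) (ae_of_all _ fun ω => sum_nonneg fun i _ =>
          sq_nonneg (G i ω)) (integrable_const C) (ae_of_all _ (hG_sq n))

end MartingaleTransform

section Visits

variable {Ω : Type*} {X : ℕ → Ω → ℕ} {u : ℕ} {ω : Ω}

lemma visits_eq_sum (X : ℕ → Ω → ℕ) (u n : ℕ) (ω : Ω) :
    visits X u n ω = ∑ i ∈ Icc 1 n, if X i ω = u then 1 else 0 := by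
  rw [visits, card_filter]

lemma visits_succ (n : ℕ) :
    visits X u (n + 1) ω = visits X u n ω + if X (n + 1) ω = u then 1 else 0 := by
  rw [visits_eq_sum, visits_eq_sum, sum_Icc_succ_top (Nat.le_add_left 1 n)]

lemma monotone_visits : Monotone fun n => visits X u n ω := fun _ _ hab =>
  card_le_card (filter_subset_filter _ (Icc_subset_Icc le_rfl hab))

lemma visits_pos {n : ℕ} (hn : 0 < n) (h : X n ω = u) : 0 < visits X u n ω :=
  card_pos.2 ⟨n, mem_filter.2 ⟨mem_Icc.2 ⟨hn, le_rfl⟩, h⟩⟩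

lemma tendsto_visits_atTop (h : ∃ᶠ n in atTop, X n ω = u) :
    Tendsto (fun n => visits X u n ω) atTop atTop := by
  refine tendsto_atTop_atTop_of_monotone monotone_visits fun b => ?_
  induction b with
  | zero => exact ⟨0, Nat.zero_le _⟩
  | succ b ih =>
    obtain ⟨n, hn⟩ := ih
    obtain ⟨k, hk, hXk⟩ := frequently_atTop.1 h (n + 1)
    obtain ⟨k, rfl⟩ := Nat.exists_eq_add_of_le' (Nat.one_le_of_lt hk)
    refine ⟨k + 1, ?_⟩
    rw [visits_succ, if_pos hXk]
    have : visits X u n ω ≤ visits X u k ω := monotone_visits (show n ≤ k by omega)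
    omega

def visitWeight (X : ℕ → Ω → ℕ) (u i : ℕ) (ω : Ω) : ℝ :=
  if X i ω = u then (visits X u i ω : ℝ)⁻¹ else 0

lemma sum_visitWeight_sq (n : ℕ) :
    ∑ i ∈ Icc 1 n, visitWeight X u i ω ^ 2 = ∑ k ∈ Icc 1 (visits X u n ω), ((k : ℝ) ^ 2)⁻¹ := by
  induction n with
  | zero => simp [visits]
  | succ n ih =>
    rw [sum_Icc_succ_top (Nat.le_add_left 1 n), ih, visitWeight, visits_succ]
    split_ifs with h
    · rw [sum_Icc_succ_top (Nat.le_add_left 1 _), inv_pow]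
    · simp

lemma sum_visitWeight_sq_le_two (n : ℕ) : ∑ i ∈ Icc 1 n, visitWeight X u i ω ^ 2 ≤ 2 := by
  have hIoo : Icc 1 (visits X u n ω) = Ioo 0 (visits X u n ω + 1) := by
    ext k
    simp only [mem_Icc, mem_Ioo]
    omega
  rw [sum_visitWeight_sq, hIoo]
  simpa using sum_Ioo_inv_sq_le (α := ℝ) 0 (visits X u n ω + 1)

end Visits

section EmpiricalRate

variable {Ω : Type*} {F : ℕ → ℝ} {U : ℕ → Ω → ℝ} {X : ℕ → Ω → ℕ} {u : ℕ} {ω : Ω}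

def centeredIndicator (U : ℕ → Ω → ℝ) (c : ℝ) (i : ℕ) (ω : Ω) : ℝ :=
  (if U i ω ≤ c then 1 else 0) - c

lemma abs_centeredIndicator_le {c : ℝ} (hc : c ∈ Set.Icc (0 : ℝ) 1) (i : ℕ) (ω : Ω) :
    |centeredIndicator U c i ω| ≤ 1 := by
  rw [centeredIndicator, abs_le]
  split_ifs <;> constructor <;> linarith [hc.1, hc.2]

lemma Fhat_sub_eq_Mart_div {n : ℕ} (hn : visits X u n ω ≠ 0) :
    Fhat F U X u n ω - F u = Mart F U X u n ω / visits X u n ω := by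
  have hv : (visits X u n ω : ℝ) = ∑ i ∈ Icc 1 n, if X i ω = u then (1 : ℝ) else 0 := by
    rw [visits_eq_sum]
    push_cast
    rfl
  have hn' : (visits X u n ω : ℝ) ≠ 0 := Nat.cast_ne_zero.2 hn
  rw [Fhat, Mart, eq_div_iff hn', sub_mul, div_mul_cancel₀ _ hn', hv, mul_sum, ← sum_sub_distrib]
  refine sum_congr rfl fun i _ => ?_
  split_ifs <;> ring

lemma Mart_increment_div_visits (i : ℕ) :
    (if X i ω = u then (1 : ℝ) else 0) * (resp F U X i ω - F u) / visits X u i ω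
      = visitWeight X u i ω * centeredIndicator U (F u) i ω := by
  unfold visitWeight centeredIndicator resp
  split_ifs with h <;> simp_all [div_eq_inv_mul]

lemma tendsto_Fhat_of_tendsto_martingaleTransform {L : ℝ}
    (hvis : Tendsto (fun n => visits X u n ω) atTop atTop)
    (hL : Tendsto (fun n => martingaleTransform (visitWeight X u) (centeredIndicator U (F u)) n ω)
      atTop (𝓝 L)) :
    Tendsto (fun n => Fhat F U X u n ω) atTop (𝓝 (F u)) := by
  have hMart : Tendsto (fun n => Mart F U X u n ω / visits X u n ω) atTop (𝓝 0) :=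
    tendsto_sum_div_of_tendsto_sum_div_s7 (fun _ _ hab => Nat.cast_le.2 (monotone_visits hab))
      (tendsto_natCast_atTop_atTop.comp hvis)
      (fun i hi h0 => by
        have : X i ω ≠ u := fun h => (visits_pos hi h).ne' (Nat.cast_eq_zero.1 h0)
        simp [this])
      (by simpa only [Mart_increment_div_visits, martingaleTransform] using hL)
  have := hMart.const_add (F u)
  rw [add_zero] at this
  refine this.congr' ?_
  filter_upwards [hvis.eventually_gt_atTop 0] with n hn
  rw [← Fhat_sub_eq_Mart_div hn.ne', add_sub_cancel]

end EmpiricalRate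

lemma exists_frequently_eq_of_eventually_mem {α : Type*} {f : ℕ → α} {s : Set α}
    (hs : s.Finite) (h : ∀ᶠ n in atTop, f n ∈ s) : ∃ a ∈ s, ∃ᶠ n in atTop, f n = a := by
  by_contra! hne
  obtain ⟨n, hn, hmem⟩ := ((eventually_all_finite hs).2 hne |>.and h).exists
  exact hn _ hmem rfl

section Endgame

variable {Ω : Type*} {m : ℕ} {p Δ₁ Δ₂ : ℝ} {F : ℕ → ℝ} {U : ℕ → Ω → ℝ} {X : ℕ → Ω → ℕ}
  {ω : Ω}

lemma frequently_eq_succ_of_intervalRule (hrule : intervalRule m p Δ₁ Δ₂ F U X) {v : ℕ}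
    (hvm : v < m) (hv : ∃ᶠ n in atTop, X n ω = v)
    (hlow : ∀ᶠ n in atTop, Fhat F U X v n ω ≤ p - Δ₁) :
    ∃ᶠ n in atTop, X n ω = v + 1 := by
  obtain ⟨N₀, hN₀⟩ := eventually_atTop.1 hlow
  refine frequently_atTop.2 fun N => ?_
  obtain ⟨n, hn, hXn⟩ := frequently_atTop.1 hv (max (max N₀ N) 1)
  refine ⟨n + 1, by omega, ?_⟩
  rw [(hrule n (by omega) ω).2.1 (hXn ▸ hN₀ n (by omega)), hXn]
  omega

lemma eventually_eq_top_of_intervalRule (hrule : intervalRule m p Δ₁ Δ₂ F U X)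
    (hm : ∃ᶠ n in atTop, X n ω = m) (hhigh : ∀ᶠ n in atTop, Fhat F U X m n ω < p + Δ₂) :
    ∀ᶠ n in atTop, X n ω = m := by
  obtain ⟨N₀, hN₀⟩ := eventually_atTop.1 hhigh
  obtain ⟨n₀, hn₀, hXn₀⟩ := frequently_atTop.1 hm (max N₀ 1)
  refine eventually_atTop.2 ⟨n₀, fun n hn => ?_⟩
  induction n, hn using Nat.le_induction with
  | base => exact hXn₀
  | succ n hn ih =>
    have h1 : 1 ≤ n := by omega
    rcases le_or_gt (Fhat F U X (X n ω) n ω) (p - Δ₁) with hle | hgt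
    · rw [(hrule n h1 ω).2.1 hle, ih]
      omega
    · rw [(hrule n h1 ω).1 hgt (ih ▸ hN₀ n (by omega)), ih]

lemma eventually_eq_top_of_tendsto_Fhat (hm : 1 ≤ m) (hFmono : StrictMonoOn F (Set.Icc 1 m))
    (hΔ₁ : 0 < Δ₁) (hΔ₂ : 0 < Δ₂) (hrule : intervalRule m p Δ₁ Δ₂ F U X)
    (hbound : F m ≤ p - Δ₁) (hXrange : ∀ n, 1 ≤ n → X n ω ∈ Set.Icc 1 m)
    (hFhat : ∀ u ∈ Set.Icc 1 m, (∃ᶠ n in atTop, X n ω = u) →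
      Tendsto (fun n => Fhat F U X u n ω) atTop (𝓝 (F u))) :
    ∀ᶠ n in atTop, X n ω = m := by
  obtain ⟨u₀, hu₀, hrec⟩ := exists_frequently_eq_of_eventually_mem (Set.finite_Icc 1 m)
    (eventually_atTop.2 ⟨1, hXrange⟩)
  have hclimb : ∀ v, u₀ ≤ v → v ≤ m → ∃ᶠ n in atTop, X n ω = v := by
    intro v hv
    induction v, hv using Nat.le_induction with
    | base => exact fun _ => hrec
    | succ v hv ih =>
      intro hvm
      have hvIcc : v ∈ Set.Icc 1 m := ⟨hu₀.1.trans hv, by omega⟩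
      have hFv : F v < p - Δ₁ := (hFmono hvIcc ⟨hm, le_rfl⟩ (by omega)).trans_le hbound
      have hv_rec := ih (Nat.le_of_succ_le hvm)
      exact frequently_eq_succ_of_intervalRule hrule hvm hv_rec
        (((hFhat v hvIcc hv_rec).eventually (gt_mem_nhds hFv)).mono fun _ => le_of_lt)
  have hrec_m := hclimb m hu₀.2 le_rfl
  exact eventually_eq_top_of_intervalRule hrule hrec_m
    ((hFhat m ⟨hm, le_rfl⟩ hrec_m).eventually (gt_mem_nhds (by linarith)))

end Endgame

section Measurability

variable {Ω : Type*} {𝒢 : MeasurableSpace Ω} {m : ℕ} {p Δ₁ Δ₂ : ℝ} {F : ℕ → ℝ}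
  {U : ℕ → Ω → ℝ} {X : ℕ → Ω → ℕ} {n : ℕ}

lemma measurable_visits (hX : ∀ i ∈ Icc 1 n, Measurable[𝒢] (X i)) (u : ℕ) :
    Measurable[𝒢] fun ω => visits X u n ω := by
  simp_rw [visits_eq_sum]
  exact Finset.measurable_sum _ fun i hi =>
    Measurable.ite (hX i hi (measurableSet_singleton u)) measurable_const measurable_const

lemma measurable_Fhat (hX : ∀ i ∈ Icc 1 n, Measurable[𝒢] (X i))
    (hU : ∀ i ∈ Icc 1 n, Measurable[𝒢] (U i)) (u : ℕ) : Measurable[𝒢] (Fhat F U X u n) := by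
  refine Measurable.div (Finset.measurable_sum _ fun i hi => ?_)
    (measurable_from_top.comp (measurable_visits hX u))
  exact Measurable.ite (hX i hi (measurableSet_singleton u))
    (Measurable.ite (measurableSet_le (hU i hi) (measurable_from_top.comp (hX i hi)))
      measurable_const measurable_const) measurable_const

lemma measurable_succ_of_intervalRule (hrule : intervalRule m p Δ₁ Δ₂ F U X) (hn : 1 ≤ n)
    (hX : ∀ i ∈ Icc 1 n, Measurable[𝒢] (X i)) (hU : ∀ i ∈ Icc 1 n, Measurable[𝒢] (U i)) :
    Measurable[𝒢] (X (n + 1)) := by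
  have hXn := hX n (right_mem_Icc.2 hn)
  have hrate : Measurable[𝒢] fun ω => Fhat F U X (X n ω) n ω :=
    (measurable_from_prod_countable_left (f := fun q : Ω × ℕ => Fhat F U X q.2 n q.1)
      (measurable_Fhat hX hU)).comp (measurable_id.prodMk hXn)
  have hstep : X (n + 1) = fun ω =>
      if Fhat F U X (X n ω) n ω ≤ p - Δ₁ then min (X n ω + 1) m
      else if p + Δ₂ ≤ Fhat F U X (X n ω) n ω then max (X n ω - 1) 1 else X n ω := by
    funext ω
    have h := hrule n hn ω
    split_ifs with hlow hhigh
    exacts [h.2.1 hlow, h.2.2 hhigh, h.1 (not_le.1 hlow) (not_le.1 hhigh)]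
  rw [hstep]
  exact Measurable.ite (measurableSet_le hrate measurable_const)
    ((measurable_from_top (f := fun x => min (x + 1) m)).comp hXn)
    (Measurable.ite (measurableSet_le measurable_const hrate)
      ((measurable_from_top (f := fun x => max (x - 1) 1)).comp hXn) hXn)

lemma measurable_centeredIndicator {i : ℕ} (hUi : Measurable[𝒢] (U i)) (c : ℝ) :
    Measurable[𝒢] (centeredIndicator U c i) :=
  (Measurable.ite (measurableSet_le hUi measurable_const) measurable_const
    measurable_const).sub_const c

lemma measurable_visitWeight (hX : ∀ i ∈ Icc 1 (n + 1), Measurable[𝒢] (X i)) (u : ℕ) :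
    Measurable[𝒢] (visitWeight X u (n + 1)) :=
  Measurable.ite (hX (n + 1) (right_mem_Icc.2 n.succ_pos) (measurableSet_singleton u))
    (measurable_from_top.comp (measurable_visits hX u)).inv measurable_const

end Measurability

section NaturalFiltration

variable {Ω : Type*} [mΩ : MeasurableSpace Ω] {U : ℕ → Ω → ℝ}

lemma measurable_natFilt (hU : ∀ i, Measurable (U i)) {i n : ℕ} (hi : i ∈ Icc 1 n) :
    Measurable[natFilt U hU n] (U i) :=
  measurable_iff_comap_le.2 <| le_iSup₂
    (f := fun i (_ : i ∈ Icc 1 n) => MeasurableSpace.comap (U i) inferInstance) i hi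

lemma indep_natFilt_comap_succ (hU : ∀ i, Measurable (U i)) {P : Measure Ω}
    (hUindep : iIndepFun U P) (n : ℕ) :
    Indep (natFilt U hU n) (MeasurableSpace.comap (U (n + 1)) inferInstance) P := by
  have h := indep_iSup_of_disjoint (fun i => (hU i).comap_le) hUindep
    (S := {i | i ∈ Icc 1 n}) (T := {n + 1}) (by simp [Set.disjoint_singleton_right])
  simp only [Set.mem_singleton_iff, iSup_iSup_eq_left] at h
  exact h

lemma measurable_X_natFilt {m x₀ : ℕ} {p Δ₁ Δ₂ : ℝ} {F : ℕ → ℝ} {X : ℕ → Ω → ℕ}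
    (hU : ∀ i, Measurable (U i)) (hX1 : ∀ ω, X 1 ω = x₀) (hrule : intervalRule m p Δ₁ Δ₂ F U X)
    (n : ℕ) : ∀ i ∈ Icc 1 (n + 1), Measurable[natFilt U hU n] (X i) := by
  induction n with
  | zero =>
    intro i hi
    obtain rfl : i = 1 := by simpa using hi
    rw [funext hX1]
    exact measurable_const
  | succ n ih =>
    have hpast : ∀ i ∈ Icc 1 (n + 1), Measurable[natFilt U hU (n + 1)] (X i) := fun i hi =>
      (ih i hi).mono ((natFilt U hU).mono n.le_succ) le_rfl
    intro i hi
    rcases (mem_Icc.1 hi).2.lt_or_eq with hlt | rfl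
    · exact hpast i (mem_Icc.2 ⟨(mem_Icc.1 hi).1, Nat.lt_succ_iff.1 hlt⟩)
    · exact measurable_succ_of_intervalRule hrule n.succ_pos hpast fun j hj =>
        measurable_natFilt hU hj

end NaturalFiltration

section Uniform

variable {Ω : Type*} [MeasurableSpace Ω] {P : Measure Ω} {U : ℕ → Ω → ℝ} {c : ℝ}

lemma integral_ite_le_eq_of_map_eq_uniform [IsProbabilityMeasure P] {i : ℕ}
    (hUi : Measurable (U i)) (hUdist : Measure.map (U i) P = volume.restrict (Set.Icc (0 : ℝ) 1))
    (hc : c ∈ Set.Icc (0 : ℝ) 1) : ∫ ω, (if U i ω ≤ c then (1 : ℝ) else 0) ∂P = c := by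
  have hind : (fun ω => if U i ω ≤ c then (1 : ℝ) else 0)
      = fun ω => (Set.Iic c).indicator 1 (U i ω) := by
    funext ω
    simp [Set.indicator_apply]
  have hIcc : Set.Iic c ∩ Set.Icc 0 1 = Set.Icc 0 c := by
    ext x
    simp only [Set.mem_inter_iff, Set.mem_Iic, Set.mem_Icc]
    exact ⟨fun h => ⟨h.2.1, h.1⟩, fun h => ⟨h.2, h.1, h.2.trans hc.2⟩⟩
  rw [hind, ← integral_map hUi.aemeasurable
    (measurable_one.indicator measurableSet_Iic).aestronglyMeasurable, hUdist,
    integral_indicator_one measurableSet_Iic, measureReal_restrict_apply measurableSet_Iic, hIcc,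
    Real.volume_real_Icc_of_le hc.1, sub_zero]

lemma integral_centeredIndicator_eq_zero [IsProbabilityMeasure P] {i : ℕ}
    (hUi : Measurable (U i)) (hUdist : Measure.map (U i) P = volume.restrict (Set.Icc (0 : ℝ) 1))
    (hc : c ∈ Set.Icc (0 : ℝ) 1) : ∫ ω, centeredIndicator U c i ω ∂P = 0 := by
  have hint : Integrable (fun ω => if U i ω ≤ c then (1 : ℝ) else 0) P :=
    .of_bound (Measurable.ite (measurableSet_le hUi measurable_const) measurable_const
      measurable_const).aestronglyMeasurable 1 (ae_of_all _ fun ω => by split_ifs <;> simp)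
  unfold centeredIndicator
  rw [integral_sub hint (integrable_const c),
    integral_ite_le_eq_of_map_eq_uniform hUi hUdist hc, integral_const, probReal_univ, one_smul,
    sub_self]

end Uniform

lemma ae_tendsto_Fhat_of_frequently {Ω : Type*} [MeasurableSpace Ω] {P : Measure Ω}
    [IsProbabilityMeasure P] {m x₀ : ℕ} {p Δ₁ Δ₂ : ℝ} {F : ℕ → ℝ} {U : ℕ → Ω → ℝ}
    {X : ℕ → Ω → ℕ} (hU : ∀ i, Measurable (U i)) (hUindep : iIndepFun U P)
    (hUdist : ∀ i, Measure.map (U i) P = volume.restrict (Set.Icc (0 : ℝ) 1))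
    (hX1 : ∀ ω, X 1 ω = x₀) (hrule : intervalRule m p Δ₁ Δ₂ F U X) {u : ℕ}
    (hFu : F u ∈ Set.Icc (0 : ℝ) 1) :
    ∀ᵐ ω ∂P, (∃ᶠ n in atTop, X n ω = u) →
      Tendsto (fun n => Fhat F U X u n ω) atTop (𝓝 (F u)) := by
  have hconv := ae_exists_tendsto_martingaleTransform (ℱ := natFilt U hU) (P := P) (C := 2)
    (G := visitWeight X u) (ξ := centeredIndicator U (F u))
    (fun n => measurable_visitWeight (measurable_X_natFilt hU hX1 hrule n) u)
    (fun n => measurable_centeredIndicator (measurable_natFilt hU (right_mem_Icc.2 n.succ_pos)) _)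
    (fun n => indep_of_indep_of_le_right (indep_natFilt_comap_succ hU hUindep n)
      (measurable_centeredIndicator (comap_measurable (U (n + 1))) _).comap_le)
    (fun n => abs_centeredIndicator_le hFu (n + 1))
    (fun n => integral_centeredIndicator_eq_zero (hU _) (hUdist _) hFu)
    (fun n _ => sum_visitWeight_sq_le_two n)
  filter_upwards [hconv] with ω ⟨L, hL⟩ hrec
  exact tendsto_Fhat_of_tendsto_martingaleTransform (tendsto_visits_atTop hrec) hL

theorem interval_design_converges_upper_boundary_general
    {Ω : Type*} [MeasurableSpace Ω] (P : Measure Ω) [IsProbabilityMeasure P]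
    (m : ℕ) (hm : 1 ≤ m)
    (F : ℕ → ℝ) (hFmono : StrictMonoOn F (Set.Icc 1 m))
    (hF01 : ∀ v ∈ Set.Icc 1 m, F v ∈ Set.Icc (0:ℝ) 1)
    (U : ℕ → Ω → ℝ) (hUmeas : ∀ i, Measurable (U i))
    (hUindep : iIndepFun U P)
    (hUdist : ∀ i, Measure.map (U i) P = volume.restrict (Set.Icc (0:ℝ) 1))
    (X : ℕ → Ω → ℕ)
    (hXrange : ∀ i, 1 ≤ i → ∀ ω, X i ω ∈ Set.Icc 1 m)
    (x₀ : ℕ) (hX1 : ∀ ω, X 1 ω = x₀)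
    (p Δ₁ Δ₂ : ℝ) (hΔ₁ : 0 < Δ₁) (hΔ₂ : 0 < Δ₂)
    (hrule : intervalRule m p Δ₁ Δ₂ F U X)
    (hbound : F m ≤ p - Δ₁) :
    ∀ᵐ ω ∂P, ∃ N, ∀ n, N ≤ n → X n ω = m := by
  have hFhat : ∀ᵐ ω ∂P, ∀ u ∈ Set.Icc 1 m, (∃ᶠ n in atTop, X n ω = u) →
      Tendsto (fun n => Fhat F U X u n ω) atTop (𝓝 (F u)) :=
    (ae_ball_iff (Set.to_countable _)).2 fun u hu =>
      ae_tendsto_Fhat_of_frequently hUmeas hUindep hUdist hX1 hrule (hF01 u hu)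
  filter_upwards [hFhat] with ω hω
  exact eventually_atTop.1 <| eventually_eq_top_of_tendsto_Fhat hm hFmono hΔ₁ hΔ₂ hrule hbound
    (fun n hn => hXrange n hn ω) hω

/-- **Theorem 1(ii), upper boundary case.** If `F(m) ≤ p−Δ₁` (so that the MTD
is the highest level `u* = m`), then almost surely the interval design eventually settles at
level `m`. -/
theorem interval_design_converges_upper_boundary
    {Ω : Type*} [MeasurableSpace Ω] (P : Measure Ω) [IsProbabilityMeasure P]
    (m : ℕ) (hm : 1 ≤ m)
    (F : ℕ → ℝ) (hFmono : StrictMonoOn F (Set.Icc 1 m))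
    (hF01 : ∀ v ∈ Set.Icc 1 m, F v ∈ Set.Icc (0:ℝ) 1)
    (U : ℕ → Ω → ℝ) (hUmeas : ∀ i, Measurable (U i))
    (hUindep : iIndepFun U P)
    (hUdist : ∀ i, Measure.map (U i) P = volume.restrict (Set.Icc (0:ℝ) 1))
    (X : ℕ → Ω → ℕ) (hXmeas : ∀ i, Measurable (X i))
    (hXrange : ∀ i, 1 ≤ i → ∀ ω, X i ω ∈ Set.Icc 1 m)
    (x₀ : ℕ) (hx₀ : x₀ ∈ Set.Icc 1 m) (hX1 : ∀ ω, X 1 ω = x₀)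
    (p Δ₁ Δ₂ : ℝ) (hp : p ∈ Set.Ioo (0:ℝ) 1) (hΔ₁ : 0 < Δ₁) (hΔ₂ : 0 < Δ₂)
    (hrule : intervalRule m p Δ₁ Δ₂ F U X)
    (hbound : F m ≤ p - Δ₁) :
    ∀ᵐ ω ∂P, ∃ N, ∀ n, N ≤ n → X n ω = m :=
  interval_design_converges_upper_boundary_general P m hm F hFmono hF01 U hUmeas hUindep hUdist X
    hXrange x₀ hX1 p Δ₁ Δ₂ hΔ₁ hΔ₂ hrule hbound
end
end
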